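/- arXiv:2509.20976 — 2 statements merged into one kernel-verified Lean document; each statement's English description precedes it below -/
import Mathlib

section
/- Let n, k, n_l be natural numbers with 1 ≤ k, n_l ≤ n, and k ∣ n, and let label : Fin n → Fin k be a labeling such that every class fiber label⁻¹({c}) has exactly n/k elements. Then, as an identity in the integers, the number of subsets S of Fin n with |S| = n_l whose image under label misses at least one class (i.e., the image of S under label is a proper subset of Fin k) equals Σ_{i=1}^{k} (−1)^{i−1} · C(k, i) · C(n − i·(n/k), n_l). -/
theorem stmt_3 (n k n_l : ℕ) (hk : 1 ≤ k) (hnl : 1 ≤ n_l) (hkn : k ≤ n) (hln : n_l ≤ n)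
    (hdvd : k ∣ n) (label : Fin n → Fin k)
    (hfiber : ∀ c : Fin k, (Finset.univ.filter (fun x => label x = c)).card = n / k) :
    ((((Finset.univ : Finset (Fin n)).powersetCard n_l).filter
        (fun S => S.image label ⊂ Finset.univ)).card : ℤ)
      = ∑ i ∈ Finset.Icc 1 k,
          (-1 : ℤ) ^ (i - 1) * (k.choose i : ℤ) * ((n - i * (n / k)).choose n_l : ℤ) := by
  classical
  set m := n / k with hm
  set A : Fin k → Finset (Finset (Fin n)) :=
    fun c => (Finset.univ.powersetCard n_l).filter (fun S => ∀ x ∈ S, label x ≠ c) with hA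
  -- the filtered set is a union
  have hset : (((Finset.univ : Finset (Fin n)).powersetCard n_l).filter
        (fun S => S.image label ⊂ Finset.univ)) = Finset.univ.biUnion A := by
    ext S
    simp only [Finset.mem_filter, Finset.mem_biUnion, Finset.mem_univ, true_and, hA]
    constructor
    · rintro ⟨hS, hsub⟩
      obtain ⟨c, -, hc⟩ := Finset.not_subset.1 hsub.2
      exact ⟨c, hS, fun x hx hlx => hc (Finset.mem_image.2 ⟨x, hx, hlx⟩)⟩
    · rintro ⟨c, hS, hc⟩
      refine ⟨hS, Finset.ssubset_iff_subset_ne.2 ⟨Finset.subset_univ _, fun h => ?_⟩⟩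
      have : c ∈ S.image label := h ▸ Finset.mem_univ c
      obtain ⟨x, hx, hlx⟩ := Finset.mem_image.1 this
      exact hc x hx hlx
  -- cardinality of intersections
  have hinf : ∀ (t : Finset (Fin k)) (ht : t.Nonempty),
      ((t.inf' ht A).card : ℤ) = ((n - t.card * m).choose n_l : ℤ) := by
    intro t ht
    have h1 : t.inf' ht A = ((Finset.univ.filter (fun x => label x ∉ t)).powersetCard n_l) := by
      ext S
      simp only [Finset.mem_inf', hA, Finset.mem_filter, Finset.mem_powersetCard,
        Finset.subset_univ, true_and]
      constructor
      · intro h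
        obtain ⟨c0, hc0⟩ := ht
        refine ⟨fun x hx => Finset.mem_filter.2 ⟨Finset.mem_univ x, fun hmem => ?_⟩, (h c0 hc0).1⟩
        exact (h _ hmem).2 x hx rfl
      · rintro ⟨hsub, hcard⟩ c hc
        exact ⟨hcard, fun x hx hlx => (Finset.mem_filter.1 (hsub hx)).2 (hlx ▸ hc)⟩
    have h2 : (Finset.univ.filter (fun x => label x ∈ t)).card = t.card * m := by
      have he : (Finset.univ.filter (fun x => label x ∈ t))
          = t.biUnion (fun c => Finset.univ.filter (fun x => label x = c)) := by
        ext x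
        simp [Finset.mem_biUnion]
      rw [he, Finset.card_biUnion]
      · simp [hfiber, Finset.sum_const, mul_comm]
      · intro c hc c' hc' hne
        simp only [Finset.disjoint_filter]
        rintro x - rfl h'
        exact hne h'
    have h3 : (Finset.univ.filter (fun x => label x ∉ t)).card = n - t.card * m := by
      have := Finset.card_filter_add_card_filter_not
        (s := (Finset.univ : Finset (Fin n))) (p := fun x => label x ∈ t)
      simp only [Finset.card_univ, Fintype.card_fin] at this
      omega
    rw [h1, Finset.card_powersetCard, h3]
  rw [hset, Finset.inclusion_exclusion_card_biUnion]
  have hstep : ∑ t : ((Finset.univ : Finset (Fin k)).powerset.filter (·.Nonempty)),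
      (-1 : ℤ) ^ (t.1.card + 1) * ((t.1.inf' (Finset.mem_filter.1 t.2).2 A).card : ℤ)
      = ∑ t ∈ (Finset.univ : Finset (Fin k)).powerset.filter (·.Nonempty),
        (-1 : ℤ) ^ (t.card + 1) * ((n - t.card * m).choose n_l : ℤ) := by
    rw [← Finset.sum_coe_sort ((Finset.univ : Finset (Fin k)).powerset.filter (·.Nonempty))
      (fun t => (-1 : ℤ) ^ (t.card + 1) * ((n - t.card * m).choose n_l : ℤ))]
    exact Finset.sum_congr rfl fun t _ => by rw [hinf]
  rw [hstep]
  have hsplit : (Finset.univ : Finset (Fin k)).powerset.filter (·.Nonempty)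
      = (Finset.Icc 1 k).biUnion (fun i => Finset.powersetCard i (Finset.univ : Finset (Fin k))) := by
    ext t
    simp only [Finset.mem_filter, Finset.mem_powerset, Finset.subset_univ, true_and,
      Finset.mem_biUnion, Finset.mem_Icc, Finset.mem_powersetCard]
    constructor
    · intro ht
      exact ⟨t.card, ⟨Finset.card_pos.2 ht, by simpa using Finset.card_le_card (Finset.subset_univ t)⟩, rfl⟩
    · rintro ⟨i, ⟨h1, -⟩, rfl⟩
      exact Finset.card_pos.1 h1
  rw [hsplit, Finset.sum_biUnion]
  · refine Finset.sum_congr rfl fun i hi => ?_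
    obtain ⟨hi1, hi2⟩ := Finset.mem_Icc.1 hi
    have : ∀ t ∈ Finset.powersetCard i (Finset.univ : Finset (Fin k)),
        (-1 : ℤ) ^ (t.card + 1) * ((n - t.card * m).choose n_l : ℤ)
        = (-1 : ℤ) ^ (i + 1) * ((n - i * m).choose n_l : ℤ) := by
      intro t ht
      rw [(Finset.mem_powersetCard.1 ht).2]
    rw [Finset.sum_congr rfl this, Finset.sum_const, Finset.card_powersetCard,
      Finset.card_univ, Fintype.card_fin, nsmul_eq_mul]
    have hpow : (-1 : ℤ) ^ (i + 1) = (-1 : ℤ) ^ (i - 1) := by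
      obtain ⟨j, rfl⟩ := Nat.exists_eq_add_of_le hi1
      simp [pow_add, pow_succ]
    rw [hpow]; ring
  · intro i hi j hj hne
    simp only [Finset.disjoint_left, Finset.mem_powersetCard]
    rintro t ⟨-, rfl⟩ ⟨-, h⟩
    exact hne h
end

section
/- Let n, k be natural numbers with 1 ≤ k, k ∣ n, and let label : Fin n → Fin k be a labeling such that every class fiber label⁻¹({c}) has exactly n/k elements. For n_l ≤ n, let P_all(n_l) = (number of subsets S of Fin n with |S| = n_l whose label-image equals Fin k) / C(n, n_l), a rational number. Then P_all is monotone nondecreasing in n_l: for all n_l ≤ n_l' ≤ n, P_all(n_l) ≤ P_all(n_l'). -/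
open Finset

lemma cov_step (n k : ℕ) (label : Fin n → Fin k) (m : ℕ) (hm : m < n) :
    (((Finset.univ : Finset (Fin n)).powersetCard m).filter
        (fun S => S.image label = Finset.univ)).card * (n - m) ≤
    (((Finset.univ : Finset (Fin n)).powersetCard (m + 1)).filter
        (fun S => S.image label = Finset.univ)).card * (m + 1) := by
  set s := ((Finset.univ : Finset (Fin n)).powersetCard m).filter
      (fun S => S.image label = Finset.univ) with hs
  set t := ((Finset.univ : Finset (Fin n)).powersetCard (m + 1)).filter
      (fun S => S.image label = Finset.univ) with ht
  apply Finset.card_mul_le_card_mul (fun S T => S ⊆ T)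
  · -- lower bound: each covering S of size m is below ≥ n - m covering sets of size m+1
    intro S hS
    simp only [hs, Finset.mem_filter, Finset.mem_powersetCard, Finset.subset_univ,
      true_and] at hS
    obtain ⟨hScard, hScov⟩ := hS
    have : (Finset.univ \ S).card = n - m := by
      rw [Finset.card_sdiff_of_subset (Finset.subset_univ S), Finset.card_univ, Fintype.card_fin, hScard]
    rw [← this]
    apply Finset.card_le_card_of_injOn (fun a => insert a S)
    · intro a ha
      simp only [Finset.mem_coe, Finset.mem_sdiff] at ha
      simp only [Finset.mem_coe, Finset.mem_bipartiteAbove, ht, Finset.mem_filter, Finset.mem_powersetCard,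
        Finset.subset_univ, true_and]
      refine ⟨⟨?_, ?_⟩, Finset.subset_insert a S⟩
      · rw [Finset.card_insert_of_notMem ha.2, hScard]
      · refine Finset.Subset.antisymm (Finset.subset_univ _) ?_
        rw [← hScov]
        exact Finset.image_subset_image (Finset.subset_insert a S)
    · intro a ha b hb hab
      simp only [Finset.mem_coe, Finset.mem_sdiff] at ha hb
      have : a ∈ insert b S := by simp only at hab; rw [← hab]; exact Finset.mem_insert_self a S
      rcases Finset.mem_insert.1 this with h | h
      · exact h
      · exact absurd h ha.2
  · -- upper bound: each T of size m+1 has ≤ m+1 subsets of size m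
    intro T hT
    simp only [ht, Finset.mem_filter, Finset.mem_powersetCard, Finset.subset_univ,
      true_and] at hT
    calc (s.bipartiteBelow (fun S T => S ⊆ T) T).card
        ≤ (T.powersetCard m).card := by
          apply Finset.card_le_card
          intro S hS
          simp only [Finset.mem_bipartiteBelow, hs, Finset.mem_filter,
            Finset.mem_powersetCard] at hS ⊢
          exact ⟨hS.2, hS.1.1.2⟩
      _ = (m + 1).choose m := by rw [Finset.card_powersetCard, hT.1]
      _ = m + 1 := Nat.choose_succ_self_right m

theorem stmt_4 (n k : ℕ) (hk : 1 ≤ k) (hdvd : k ∣ n) (label : Fin n → Fin k)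
    (hfiber : ∀ c : Fin k, (Finset.univ.filter (fun x => label x = c)).card = n / k)
    (P_all : ℕ → ℚ)
    (hP : ∀ n_l ≤ n,
      P_all n_l = ((((Finset.univ : Finset (Fin n)).powersetCard n_l).filter
          (fun S => S.image label = Finset.univ)).card : ℚ) / (n.choose n_l : ℚ)) :
    ∀ n_l n_l' : ℕ, n_l ≤ n_l' → n_l' ≤ n → P_all n_l ≤ P_all n_l' := by
  -- single step
  have step : ∀ m, m + 1 ≤ n → P_all m ≤ P_all (m + 1) := by
    intro m hm1
    have hm : m < n := hm1
    rw [hP m hm.le, hP (m + 1) hm1]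
    set a := (((Finset.univ : Finset (Fin n)).powersetCard m).filter
        (fun S => S.image label = Finset.univ)).card
    set b := (((Finset.univ : Finset (Fin n)).powersetCard (m + 1)).filter
        (fun S => S.image label = Finset.univ)).card
    have key : a * (n - m) ≤ b * (m + 1) := cov_step n k label m hm
    have hc1 : 0 < n.choose m := Nat.choose_pos hm.le
    have hc2 : 0 < n.choose (m + 1) := Nat.choose_pos hm1
    rw [div_le_div_iff₀ (by exact_mod_cast hc1) (by exact_mod_cast hc2)]
    have hid : n.choose (m + 1) * (m + 1) = n.choose m * (n - m) :=
      Nat.choose_succ_right_eq n m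
    have : a * n.choose (m + 1) * (m + 1) ≤ b * n.choose m * (m + 1) := by
      calc a * n.choose (m + 1) * (m + 1) = n.choose m * (a * (n - m)) := by
            rw [mul_assoc, hid]; ring
        _ ≤ n.choose m * (b * (m + 1)) := Nat.mul_le_mul_left _ key
        _ = b * n.choose m * (m + 1) := by ring
    have := Nat.le_of_mul_le_mul_right this (Nat.succ_pos m)
    exact_mod_cast this
  intro n_l n_l' hle hle'
  induction n_l', hle using Nat.le_induction with
  | base => exact le_refl _
  | succ m hm ih =>
    exact le_trans (ih (le_trans (Nat.le_succ m) hle')) (step m hle')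
end
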